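/- arXiv:2505.05620 — 7 statements merged into one kernel-verified Lean document; each statement's English description precedes it below -/
import Mathlib

section
/- Let (X, 𝒜, m) be a measure space and let (Y_n)_{n∈ℕ} and (Z_n)_{n∈ℕ} be sequences of measurable subsets of X that are internested, i.e. there is an integer k ≥ 1 such that Y_{n+k} ⊆ Z_n ⊆ Y_{n−k} for all n ≥ k. If (Y_n) is regular, i.e. there exist a real C > 0 and an integer K ≥ 1 with m(Y_{n+K}) ≥ C·m(Y_n) for all n ∈ ℕ, then (Z_n) is regular as well: there exist a real C′ > 0 and an integer K′ ≥ 1 such that m(Z_{n+K′}) ≥ C′·m(Z_n) for all n ≥ k. Moreover, if m(Y_n) > 0 for all n, then m(Z_n) > 0 for all n ≥ k. -/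
open MeasureTheory

/-- If `(Y n)` and `(Z n)` are internested sequences of measurable sets
and `(Y n)` is regular, then `(Z n)` is regular; moreover if all `Y n` have positive
measure then so do the `Z n` (for `n ≥ k`). -/
theorem internested_regular {X : Type*} [MeasurableSpace X] (μ : Measure X)
    (Y Z : ℕ → Set X)
    (hY : ∀ n, MeasurableSet (Y n)) (hZ : ∀ n, MeasurableSet (Z n))
    (k : ℕ) (hk : 1 ≤ k)
    (hinter : ∀ n, k ≤ n → Y (n + k) ⊆ Z n ∧ Z n ⊆ Y (n - k))
    (C : ℝ) (hC : 0 < C) (K : ℕ) (hK : 1 ≤ K)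
    (hreg : ∀ n, ENNReal.ofReal C * μ (Y n) ≤ μ (Y (n + K))) :
    (∃ C' : ℝ, 0 < C' ∧ ∃ K' : ℕ, 1 ≤ K' ∧
      ∀ n, k ≤ n → ENNReal.ofReal C' * μ (Z n) ≤ μ (Z (n + K'))) ∧
    ((∀ n, 0 < μ (Y n)) → ∀ n, k ≤ n → 0 < μ (Z n)) := by
  -- iterated regularity
  have hiter : ∀ m n, ENNReal.ofReal C ^ m * μ (Y n) ≤ μ (Y (n + m * K)) := by
    intro m
    induction m with
    | zero => intro n; simp
    | succ m ih =>
      intro n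
      have h1 := hreg (n + m * K)
      have h2 := ih n
      calc ENNReal.ofReal C ^ (m + 1) * μ (Y n)
          = ENNReal.ofReal C * (ENNReal.ofReal C ^ m * μ (Y n)) := by ring
        _ ≤ ENNReal.ofReal C * μ (Y (n + m * K)) := by
            exact mul_le_mul_right h2 _
        _ ≤ μ (Y (n + m * K + K)) := h1
        _ = μ (Y (n + (m + 1) * K)) := by ring_nf
  constructor
  · refine ⟨C ^ (2 * k + 1), pow_pos hC _, (2 * k + 1) * K - 2 * k, ?_, ?_⟩
    · have : 2 * k + 1 ≤ (2 * k + 1) * K := Nat.le_mul_of_pos_right _ hK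
      omega
    · intro n hn
      set K' := (2 * k + 1) * K - 2 * k with hK'
      have hKk : 2 * k + 1 ≤ (2 * k + 1) * K := Nat.le_mul_of_pos_right _ hK
      have harith : n + K' + k = (n - k) + (2 * k + 1) * K := by omega
      have h1 : Z n ⊆ Y (n - k) := (hinter n hn).2
      have h2 : Y (n + K' + k) ⊆ Z (n + K') :=
        (hinter (n + K') (by omega)).1
      calc ENNReal.ofReal (C ^ (2 * k + 1)) * μ (Z n)
          ≤ ENNReal.ofReal (C ^ (2 * k + 1)) * μ (Y (n - k)) :=
            mul_le_mul_right (measure_mono h1) _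
        _ = ENNReal.ofReal C ^ (2 * k + 1) * μ (Y (n - k)) := by
            rw [ENNReal.ofReal_pow hC.le]
        _ ≤ μ (Y ((n - k) + (2 * k + 1) * K)) := hiter _ _
        _ = μ (Y (n + K' + k)) := by rw [harith]
        _ ≤ μ (Z (n + K')) := measure_mono h2
  · intro hpos n hn
    exact lt_of_lt_of_le (hpos (n + k)) (measure_mono (hinter n hn).1)
end

section
/- Let (X, 𝒜, m) be a measure space and let (Y_n)_{n∈ℕ} and (Z_n)_{n∈ℕ} be sequences of measurable subsets of X that are internested, i.e. there is an integer k ≥ 1 such that Y_{n+k} ⊆ Z_n ⊆ Y_{n−k} for all n ≥ k. Suppose (Y_n) is regular, i.e. there exist a real C > 0 and an integer K ≥ 1 with m(Y_{n+K}) ≥ C·m(Y_n) for all n ∈ ℕ, and suppose 0 < m(Y_n) < ∞ for all n. Then for every measurable set A ⊆ X, the densities satisfy: m(A ∩ Y_n)/m(Y_n) → 1 as n → ∞ if and only if m(A ∩ Z_n)/m(Z_n) → 1 as n → ∞. -/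
/-!
The density of `A` tends to `1` exactly when the density of `Aᶜ` tends to `0`, and the density
of `Aᶜ` can only grow when the numerator grows and the denominator shrinks. Internesting gives
`Y (n + 2k) ⊆ Z (n + k) ⊆ Y n`, so the `Y n` are nested along steps of `2k`; together with
regularity this makes `μ (Y n)`, `μ (Z (n + k))` and `μ (Y (n + 2k))` comparable up to the fixed
factor `C ^ (2k)`. Hence the density of `Aᶜ` in either sequence is at most a constant times its
density in the other, up to an index shift.
-/

open MeasureTheory Filter Topology
open scoped ENNReal

theorem ENNReal.tendsto_one_sub_of_add_eq_one {ι : Type*} {l : Filter ι} {f g : ι → ℝ≥0∞}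
    {a : ℝ≥0∞} (hfg : ∀ᶠ i in l, f i + g i = 1) (hf : Tendsto f l (𝓝 a)) :
    Tendsto g l (𝓝 (1 - a)) := by
  refine (((ENNReal.continuous_sub_left one_ne_top).tendsto a).comp hf).congr' ?_
  filter_upwards [hfg] with i hi
  have hfi : f i ≠ ∞ := ne_top_of_le_ne_top one_ne_top (hi ▸ le_self_add)
  rw [← hi, Function.comp_apply, ENNReal.add_sub_cancel_left hfi]

theorem ENNReal.tendsto_one_iff_tendsto_zero_of_add_eq_one {ι : Type*} {l : Filter ι}
    {f g : ι → ℝ≥0∞} (hfg : ∀ᶠ i in l, f i + g i = 1) :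
    Tendsto f l (𝓝 1) ↔ Tendsto g l (𝓝 0) := by
  refine ⟨fun hf => by simpa using tendsto_one_sub_of_add_eq_one hfg hf, fun hg => ?_⟩
  simpa using tendsto_one_sub_of_add_eq_one (hfg.mono fun i hi => (add_comm _ _).trans hi) hg

theorem ENNReal.tendsto_zero_of_le_const_mul_shift {f g : ℕ → ℝ≥0∞} {D : ℝ≥0∞} (hD : D ≠ ∞)
    (s t : ℕ) (hg : Tendsto g atTop (𝓝 0)) (hfg : ∀ n, f (n + s) ≤ D * g (n + t)) :
    Tendsto f atTop (𝓝 0) := by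
  rw [← tendsto_add_atTop_iff_nat s]
  have hDg : Tendsto (fun n => D * g (n + t)) atTop (𝓝 0) := by
    simpa using ENNReal.Tendsto.const_mul ((tendsto_add_atTop_iff_nat t).2 hg) (Or.inr hD)
  exact tendsto_of_tendsto_of_tendsto_of_le_of_le tendsto_const_nhds hDg (fun _ => zero_le) hfg

namespace MeasureTheory

variable {α : Type*} [MeasurableSpace α] {μ : Measure α}

theorem measure_inter_div_add_measure_compl_inter_div {A W : Set α} (hA : MeasurableSet A)
    (h0 : μ W ≠ 0) (hT : μ W ≠ ∞) :
    μ (A ∩ W) / μ W + μ (Aᶜ ∩ W) / μ W = 1 := by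
  rw [ENNReal.div_add_div_same, Set.inter_comm, ← Set.sdiff_eq_compl_inter,
    measure_inter_add_sdiff W hA, ENNReal.div_self h0 hT]

theorem tendsto_measure_inter_div_one_iff_compl {ι : Type*} {l : Filter ι} {A : Set α}
    (hA : MeasurableSet A) {W : ι → Set α} (hW : ∀ᶠ i in l, μ (W i) ≠ 0 ∧ μ (W i) ≠ ∞) :
    Tendsto (fun i => μ (A ∩ W i) / μ (W i)) l (𝓝 1) ↔
      Tendsto (fun i => μ (Aᶜ ∩ W i) / μ (W i)) l (𝓝 0) :=
  ENNReal.tendsto_one_iff_tendsto_zero_of_add_eq_one <|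
    hW.mono fun _ hi => measure_inter_div_add_measure_compl_inter_div hA hi.1 hi.2

theorem measure_inter_div_le_inv_mul_of_subset {B W W' : Set α} {e : ℝ≥0∞} (he0 : e ≠ 0)
    (heT : e ≠ ∞) (hW : W ⊆ W') (hμ : e * μ W' ≤ μ W) :
    μ (B ∩ W) / μ W ≤ e⁻¹ * (μ (B ∩ W') / μ W') :=
  calc μ (B ∩ W) / μ W ≤ μ (B ∩ W') / (e * μ W') :=
        ENNReal.div_le_div (measure_mono (Set.inter_subset_inter_right B hW)) hμ
    _ = e⁻¹ * (μ (B ∩ W') / μ W') := by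
        rw [div_eq_mul_inv, ENNReal.mul_inv (Or.inl he0) (Or.inl heT), div_eq_mul_inv,
          mul_left_comm]

theorem pow_mul_measure_le_of_regular {Y : ℕ → Set α} {c : ℝ≥0∞} {K : ℕ}
    (hreg : ∀ n, c * μ (Y n) ≤ μ (Y (n + K))) (n j : ℕ) :
    c ^ j * μ (Y n) ≤ μ (Y (n + j * K)) := by
  induction j with
  | zero => simp
  | succ j ih =>
    calc c ^ (j + 1) * μ (Y n) = c * (c ^ j * μ (Y n)) := by ring
      _ ≤ c * μ (Y (n + j * K)) := by gcongr
      _ ≤ μ (Y (n + (j + 1) * K)) := by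
        simpa only [add_mul, one_mul, add_assoc] using hreg (n + j * K)

theorem pow_mul_measure_le_of_regular_of_nested {Y : ℕ → Set α} {c : ℝ≥0∞} {K d : ℕ}
    (hK : 1 ≤ K) (hreg : ∀ n, c * μ (Y n) ≤ μ (Y (n + K))) (hnest : ∀ n, Y (n + d) ⊆ Y n)
    (n : ℕ) : c ^ d * μ (Y n) ≤ μ (Y (n + d)) := by
  have hanti : Antitone fun t => Y (n + d + t * d) :=
    antitone_nat_of_succ_le fun t => by rw [add_one_mul, ← add_assoc]; exact hnest _
  calc c ^ d * μ (Y n) ≤ μ (Y (n + d * K)) := pow_mul_measure_le_of_regular hreg n d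
    _ = μ (Y (n + d + (K - 1) * d)) := by
        congr 2
        obtain ⟨K, rfl⟩ := Nat.exists_eq_add_of_le hK
        simp only [add_tsub_cancel_left]
        ring
    _ ≤ μ (Y (n + d)) := measure_mono (by simpa using hanti (Nat.zero_le (K - 1)))

end MeasureTheory

theorem internested_shift {α : Type*} {Y Z : ℕ → Set α} {k : ℕ}
    (hinter : ∀ n, k ≤ n → Y (n + k) ⊆ Z n ∧ Z n ⊆ Y (n - k)) (n : ℕ) :
    Y (n + 2 * k) ⊆ Z (n + k) ∧ Z (n + k) ⊆ Y n := by
  simpa only [two_mul, add_assoc, add_tsub_cancel_right] using hinter (n + k) le_add_self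

theorem internested_density_equiv_general {X : Type*} [MeasurableSpace X] (μ : Measure X)
    (Y Z : ℕ → Set X)
    (k : ℕ)
    (hinter : ∀ n, k ≤ n → Y (n + k) ⊆ Z n ∧ Z n ⊆ Y (n - k))
    (C : ℝ) (hC : 0 < C) (K : ℕ) (hK : 1 ≤ K)
    (hreg : ∀ n, ENNReal.ofReal C * μ (Y n) ≤ μ (Y (n + K)))
    (hpos : ∀ n, 0 < μ (Y n)) (hfin : ∀ n, μ (Y n) < ⊤)
    (A : Set X) (hA : MeasurableSet A) :
    Tendsto (fun n => μ (A ∩ Y n) / μ (Y n)) atTop (nhds 1) ↔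
      Tendsto (fun n => μ (A ∩ Z n) / μ (Z n)) atTop (nhds 1) := by
  have hshift := internested_shift hinter
  set e := ENNReal.ofReal C ^ (2 * k)
  have he0 : e ≠ 0 := pow_ne_zero _ (ENNReal.ofReal_pos.2 hC).ne'
  have heT : e ≠ ∞ := ENNReal.pow_ne_top ENNReal.ofReal_ne_top
  have hgrowth (n : ℕ) : e * μ (Y n) ≤ μ (Y (n + 2 * k)) :=
    pow_mul_measure_le_of_regular_of_nested hK hreg (fun m => (hshift m).1.trans (hshift m).2) n
  have hZ : ∀ᶠ n in atTop, μ (Z n) ≠ 0 ∧ μ (Z n) ≠ ∞ :=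
    eventually_atTop.2 ⟨k, fun n hn =>
      ⟨(measure_pos_of_superset (hinter n hn).1 (hpos _).ne').ne',
        measure_ne_top_of_subset (hinter n hn).2 (hfin _).ne⟩⟩
  rw [tendsto_measure_inter_div_one_iff_compl hA (.of_forall fun n => ⟨(hpos n).ne', (hfin n).ne⟩),
    tendsto_measure_inter_div_one_iff_compl hA hZ]
  have heinv : e⁻¹ ≠ ∞ := ENNReal.inv_ne_top.2 he0
  constructor
  · refine fun hY0 => ENNReal.tendsto_zero_of_le_const_mul_shift heinv k 0 hY0 fun n => ?_
    exact measure_inter_div_le_inv_mul_of_subset he0 heT (hshift n).2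
      ((hgrowth n).trans (measure_mono (hshift n).1))
  · refine fun hZ0 => ENNReal.tendsto_zero_of_le_const_mul_shift heinv (2 * k) k hZ0 fun n => ?_
    exact measure_inter_div_le_inv_mul_of_subset he0 heT (hshift n).1
      ((mul_le_mul_right (measure_mono (hshift n).2) e).trans (hgrowth n))

/-- If `(Y n)` and `(Z n)` are internested sequences of measurable sets,
`(Y n)` is regular, and `0 < μ (Y n) < ∞` for all `n`, then for every measurable set
`A` the density of `A` in `Y n` tends to `1` iff the density of `A` in `Z n` tends
to `1`. -/
theorem internested_density_equiv {X : Type*} [MeasurableSpace X] (μ : Measure X)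
    (Y Z : ℕ → Set X)
    (hY : ∀ n, MeasurableSet (Y n)) (hZ : ∀ n, MeasurableSet (Z n))
    (k : ℕ) (hk : 1 ≤ k)
    (hinter : ∀ n, k ≤ n → Y (n + k) ⊆ Z n ∧ Z n ⊆ Y (n - k))
    (C : ℝ) (hC : 0 < C) (K : ℕ) (hK : 1 ≤ K)
    (hreg : ∀ n, ENNReal.ofReal C * μ (Y n) ≤ μ (Y (n + K)))
    (hpos : ∀ n, 0 < μ (Y n)) (hfin : ∀ n, μ (Y n) < ⊤)
    (A : Set X) (hA : MeasurableSet A) :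
    Tendsto (fun n => μ (A ∩ Y n) / μ (Y n)) atTop (nhds 1) ↔
      Tendsto (fun n => μ (A ∩ Z n) / μ (Z n)) atTop (nhds 1) :=
  internested_density_equiv_general μ Y Z k hinter C hC K hK hreg hpos hfin A hA
end

section
/- Assume f satisfies the separation hypothesis. Let x, y ∈ M_f and let m ≥ 1 be an integer such that x(n) = y(n) for every integer n > −m, while x(−m) ≠ y(−m). Then d(x, y) = λ^m. -/
open Metric

/-- The space of (full) orbits of `f : M → M`. -/
def OrbitSpace {M : Type*} (f : M → M) : Set (ℤ → M) :=
  {x | ∀ n : ℤ, f (x n) = x (n + 1)}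

/-- The metric on the space of orbits:
`d(x,y) = sup_{n ≥ 0} λⁿ · min (dist (x (-n)) (y (-n))) 1`. -/
noncomputable def orbitDist {M : Type*} [MetricSpace M] (lam : ℝ) (x y : ℤ → M) : ℝ :=
  ⨆ n : ℕ, lam ^ n * min (dist (x (-(n : ℤ))) (y (-(n : ℤ)))) 1

/-- under the separation hypothesis, if `x n = y n` for all `n > -m`
and `x (-m) ≠ y (-m)` (with `m ≥ 1`), then `d(x,y) = λ^m`. -/
theorem orbitDist_eq_pow {M : Type*} [MetricSpace M] (f : M → M)
    (hsep : ∀ a b : M, a ≠ b → f a = f b → 1 ≤ dist a b)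
    (lam : ℝ) (hlam0 : 0 < lam) (hlam1 : lam < 1)
    (x y : ℤ → M) (hx : x ∈ OrbitSpace f) (hy : y ∈ OrbitSpace f)
    (m : ℕ) (hm : 1 ≤ m)
    (heq : ∀ n : ℤ, -(m : ℤ) < n → x n = y n)
    (hne : x (-(m : ℤ)) ≠ y (-(m : ℤ))) :
    orbitDist lam x y = lam ^ m := by
  have hfa : f (x (-(m : ℤ))) = f (y (-(m : ℤ))) := by
    rw [hx (-(m : ℤ)), hy (-(m : ℤ))]
    exact heq (-(m : ℤ) + 1) (by omega)
  have hdist : 1 ≤ dist (x (-(m : ℤ))) (y (-(m : ℤ))) := hsep _ _ hne hfa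
  have hterm : ∀ n : ℕ,
      lam ^ n * min (dist (x (-(n : ℤ))) (y (-(n : ℤ)))) 1 ≤ lam ^ m := by
    intro n
    rcases lt_or_ge n m with h | h
    · have : x (-(n : ℤ)) = y (-(n : ℤ)) := heq _ (by omega)
      rw [this, dist_self]
      simp [min_eq_left (zero_le_one' ℝ)]
      positivity
    · calc lam ^ n * min (dist (x (-(n : ℤ))) (y (-(n : ℤ)))) 1
          ≤ lam ^ n * 1 := by
            apply mul_le_mul_of_nonneg_left (min_le_right _ _) (by positivity)
        _ = lam ^ n := mul_one _
        _ ≤ lam ^ m := pow_le_pow_of_le_one hlam0.le hlam1.le h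
  apply le_antisymm
  · exact ciSup_le hterm
  · have hval : lam ^ m * min (dist (x (-(m : ℤ))) (y (-(m : ℤ)))) 1 = lam ^ m := by
      rw [min_eq_right hdist, mul_one]
    calc lam ^ m = lam ^ m * min (dist (x (-(m : ℤ))) (y (-(m : ℤ)))) 1 := hval.symm
      _ ≤ orbitDist lam x y := le_ciSup ⟨lam ^ m, fun r ⟨n, hn⟩ => hn ▸ hterm n⟩ m
end

section
/- Assume f satisfies the separation hypothesis and equip M_f with the metric d. If α, β : [0,1] → M_f are continuous maps (with respect to d) such that π(α(t)) = π(β(t)) for all t ∈ [0,1], then the function t ↦ d(α(t), β(t)) is constant on [0,1]. (This says that the holonomy along the scu-sheets of M_f, obtained by continuing along two paths in M_f that lie over a common base path in M, is an isometry of the fibers for the metric d.) -/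
open Metric Set

section Aux

variable {M : Type*} [MetricSpace M]

lemma orbitTerm_nonneg (lam : ℝ) (h0 : 0 < lam) (x y : ℤ → M) (n : ℕ) :
    0 ≤ lam ^ n * min (dist (x (-(n : ℤ))) (y (-(n : ℤ)))) 1 :=
  mul_nonneg (pow_pos h0 n).le (le_min dist_nonneg zero_le_one)

lemma orbitTerm_le_pow (lam : ℝ) (h0 : 0 < lam) (x y : ℤ → M) (n : ℕ) :
    lam ^ n * min (dist (x (-(n : ℤ))) (y (-(n : ℤ)))) 1 ≤ lam ^ n := by
  have := mul_le_mul_of_nonneg_left (min_le_right (dist (x (-(n : ℤ))) (y (-(n : ℤ)))) 1)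
    (pow_pos h0 n).le
  simpa using this

lemma orbitDist_bdd (lam : ℝ) (h0 : 0 < lam) (h1 : lam < 1) (x y : ℤ → M) :
    BddAbove (Set.range fun n : ℕ => lam ^ n * min (dist (x (-(n : ℤ))) (y (-(n : ℤ)))) 1) := by
  refine ⟨1, ?_⟩
  rintro _ ⟨n, rfl⟩
  calc lam ^ n * min (dist (x (-(n : ℤ))) (y (-(n : ℤ)))) 1 ≤ lam ^ n :=
        orbitTerm_le_pow lam h0 x y n
    _ ≤ 1 := pow_le_one₀ h0.le h1.le

lemma orbitDist_symm (lam : ℝ) (x y : ℤ → M) :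
    orbitDist lam x y = orbitDist lam y x := by
  unfold orbitDist
  simp [dist_comm]

lemma min_dist_triangle (a b c : M) :
    min (dist a c) 1 ≤ min (dist a b) 1 + min (dist b c) 1 := by
  have hbc : (0:ℝ) ≤ min (dist b c) 1 := le_min dist_nonneg zero_le_one
  have hab : (0:ℝ) ≤ min (dist a b) 1 := le_min dist_nonneg zero_le_one
  rcases le_total 1 (dist a b) with h | h
  · have : min (dist a b) 1 = 1 := min_eq_right h
    have h2 : min (dist a c) 1 ≤ 1 := min_le_right _ _
    linarith
  rcases le_total 1 (dist b c) with h' | h'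
  · have : min (dist b c) 1 = 1 := min_eq_right h'
    have h2 : min (dist a c) 1 ≤ 1 := min_le_right _ _
    linarith
  · rw [min_eq_left h, min_eq_left h']
    calc min (dist a c) 1 ≤ dist a c := min_le_left _ _
      _ ≤ dist a b + dist b c := dist_triangle a b c
    
lemma orbitDist_triangle (lam : ℝ) (h0 : 0 < lam) (h1 : lam < 1) (x y z : ℤ → M) :
    orbitDist lam x z ≤ orbitDist lam x y + orbitDist lam y z := by
  refine ciSup_le fun n => ?_
  have key : lam ^ n * min (dist (x (-(n : ℤ))) (z (-(n : ℤ)))) 1 ≤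
      lam ^ n * min (dist (x (-(n : ℤ))) (y (-(n : ℤ)))) 1 +
      lam ^ n * min (dist (y (-(n : ℤ))) (z (-(n : ℤ)))) 1 := by
    rw [← mul_add]
    exact mul_le_mul_of_nonneg_left (min_dist_triangle _ _ _) (pow_pos h0 n).le
  refine key.trans (add_le_add ?_ ?_)
  · exact le_ciSup (orbitDist_bdd lam h0 h1 x y) n
  · exact le_ciSup (orbitDist_bdd lam h0 h1 y z) n

lemma orbitDist_nonneg (lam : ℝ) (h0 : 0 < lam) (h1 : lam < 1) (x y : ℤ → M) :
    0 ≤ orbitDist lam x y :=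
  (orbitTerm_nonneg lam h0 x y 0).trans (le_ciSup (orbitDist_bdd lam h0 h1 x y) 0)

/-- The key structure lemma: for two orbits with the same `0`-coordinate, the orbit
distance is `0` or a power of `lam`. -/
lemma orbitDist_eq_zero_or_pow (f : M → M)
    (hsep : ∀ a b : M, a ≠ b → f a = f b → 1 ≤ dist a b)
    (lam : ℝ) (h0 : 0 < lam) (h1 : lam < 1) (x y : ℤ → M)
    (hx : x ∈ OrbitSpace f) (hy : y ∈ OrbitSpace f) (hxy : x 0 = y 0) :
    orbitDist lam x y = 0 ∨ ∃ n : ℕ, orbitDist lam x y = lam ^ n := by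
  classical
  by_cases hall : ∀ n : ℕ, x (-(n : ℤ)) = y (-(n : ℤ))
  · left
    have hterm : ∀ n : ℕ, lam ^ n * min (dist (x (-(n : ℤ))) (y (-(n : ℤ)))) 1 = 0 := by
      intro n; rw [hall n, dist_self]; simp
    unfold orbitDist
    simp only [hterm]
    exact ciSup_const
  · right
    push_neg at hall
    set n₀ := Nat.find hall with hn₀def
    have hspec : x (-(n₀ : ℤ)) ≠ y (-(n₀ : ℤ)) := Nat.find_spec hall
    have hmin : ∀ m : ℕ, m < n₀ → x (-(m : ℤ)) = y (-(m : ℤ)) := by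
      intro m hm
      by_contra h
      exact Nat.find_min hall hm h
    have hne0 : n₀ ≠ 0 := by
      intro h
      apply hspec
      rw [h]; simpa using hxy
    obtain ⟨k, hk⟩ : ∃ k, n₀ = k + 1 := Nat.exists_eq_succ_of_ne_zero hne0
    -- separation gives `dist ≥ 1` at `n₀`
    have hfx : f (x (-(n₀ : ℤ))) = x (-(k : ℤ)) := by
      have := hx (-(n₀ : ℤ))
      rw [this]
      congr 1
      rw [hk]; push_cast; ring
    have hfy : f (y (-(n₀ : ℤ))) = y (-(k : ℤ)) := by
      have := hy (-(n₀ : ℤ))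
      rw [this]
      congr 1
      rw [hk]; push_cast; ring
    have hkk : x (-(k : ℤ)) = y (-(k : ℤ)) := hmin k (by omega)
    have hdist : 1 ≤ dist (x (-(n₀ : ℤ))) (y (-(n₀ : ℤ))) := by
      apply hsep _ _ hspec
      rw [hfx, hfy, hkk]
    have hterm₀ : lam ^ n₀ * min (dist (x (-(n₀ : ℤ))) (y (-(n₀ : ℤ)))) 1 = lam ^ n₀ := by
      rw [min_eq_right hdist, mul_one]
    refine ⟨n₀, le_antisymm ?_ ?_⟩
    · refine ciSup_le fun n => ?_
      rcases lt_or_ge n n₀ with hn | hn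
      · rw [hmin n hn, dist_self]
        have : min (0:ℝ) 1 = 0 := min_eq_left zero_le_one
        rw [this, mul_zero]
        exact (pow_pos h0 n₀).le
      · calc lam ^ n * min (dist (x (-(n : ℤ))) (y (-(n : ℤ)))) 1 ≤ lam ^ n :=
              orbitTerm_le_pow lam h0 x y n
          _ ≤ lam ^ n₀ := pow_le_pow_of_le_one h0.le h1.le hn
    · rw [← hterm₀]
      exact le_ciSup (orbitDist_bdd lam h0 h1 x y) n₀

end Aux

/-- if `α, β : [0,1] → M_f` are continuous for the metric `d` and
project to the same path in `M` (i.e. `π ∘ α = π ∘ β` on `[0,1]`), then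
`t ↦ d(α t, β t)` is constant on `[0,1]`: the `scu`-holonomy is an isometry of the
fibers. -/
theorem orbitDist_const_along_paths {M : Type*} [MetricSpace M] (f : M → M)
    (hsep : ∀ a b : M, a ≠ b → f a = f b → 1 ≤ dist a b)
    (lam : ℝ) (hlam0 : 0 < lam) (hlam1 : lam < 1)
    (α β : ℝ → (ℤ → M))
    (hα : ∀ t ∈ Icc (0 : ℝ) 1, α t ∈ OrbitSpace f)
    (hβ : ∀ t ∈ Icc (0 : ℝ) 1, β t ∈ OrbitSpace f)
    (hαcont : ∀ t ∈ Icc (0 : ℝ) 1, ∀ ε > (0 : ℝ), ∃ δ > (0 : ℝ),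
      ∀ s ∈ Icc (0 : ℝ) 1, |s - t| < δ → orbitDist lam (α s) (α t) < ε)
    (hβcont : ∀ t ∈ Icc (0 : ℝ) 1, ∀ ε > (0 : ℝ), ∃ δ > (0 : ℝ),
      ∀ s ∈ Icc (0 : ℝ) 1, |s - t| < δ → orbitDist lam (β s) (β t) < ε)
    (hproj : ∀ t ∈ Icc (0 : ℝ) 1, α t 0 = β t 0) :
    ∀ s ∈ Icc (0 : ℝ) 1, ∀ t ∈ Icc (0 : ℝ) 1,
      orbitDist lam (α s) (β s) = orbitDist lam (α t) (β t) := by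
  set g : ℝ → ℝ := fun t => orbitDist lam (α t) (β t) with hg
  -- `g` is continuous on `[0,1]`
  have gcont : ContinuousOn g (Icc (0:ℝ) 1) := by
    intro t ht
    rw [Metric.continuousWithinAt_iff]
    intro ε hε
    obtain ⟨δ₁, hδ₁, h1⟩ := hαcont t ht (ε/2) (by linarith)
    obtain ⟨δ₂, hδ₂, h2⟩ := hβcont t ht (ε/2) (by linarith)
    refine ⟨min δ₁ δ₂, lt_min hδ₁ hδ₂, fun s hs hd => ?_⟩
    rw [Real.dist_eq] at hd ⊢
    have hA : orbitDist lam (α s) (α t) < ε/2 :=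
      h1 s hs (lt_of_lt_of_le hd (min_le_left _ _))
    have hB : orbitDist lam (β s) (β t) < ε/2 :=
      h2 s hs (lt_of_lt_of_le hd (min_le_right _ _))
    have t1 : g s ≤ orbitDist lam (α s) (α t) + (g t + orbitDist lam (β s) (β t)) := by
      calc g s ≤ orbitDist lam (α s) (α t) + orbitDist lam (α t) (β s) :=
            orbitDist_triangle lam hlam0 hlam1 _ _ _
        _ ≤ orbitDist lam (α s) (α t) +
            (orbitDist lam (α t) (β t) + orbitDist lam (β t) (β s)) := by
            gcongr
            exact orbitDist_triangle lam hlam0 hlam1 _ _ _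
        _ = _ := by rw [orbitDist_symm lam (β t) (β s)]
    have t2 : g t ≤ orbitDist lam (α s) (α t) + (g s + orbitDist lam (β s) (β t)) := by
      calc g t ≤ orbitDist lam (α t) (α s) + orbitDist lam (α s) (β t) :=
            orbitDist_triangle lam hlam0 hlam1 _ _ _
        _ ≤ orbitDist lam (α t) (α s) +
            (orbitDist lam (α s) (β s) + orbitDist lam (β s) (β t)) := by
            gcongr
            exact orbitDist_triangle lam hlam0 hlam1 _ _ _
        _ = _ := by rw [orbitDist_symm lam (α t) (α s)]
    rw [abs_sub_lt_iff]
    constructor <;> linarith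
  -- values of `g` lie in `{0} ∪ {lam ^ n}`
  have gval : ∀ t ∈ Icc (0:ℝ) 1, g t = 0 ∨ ∃ n : ℕ, g t = lam ^ n := fun t ht =>
    orbitDist_eq_zero_or_pow f hsep lam hlam0 hlam1 (α t) (β t) (hα t ht) (hβ t ht)
      (hproj t ht)
  -- auxiliary: `g s < g t` is impossible
  have aux : ∀ s ∈ Icc (0:ℝ) 1, ∀ t ∈ Icc (0:ℝ) 1, ¬ g s < g t := by
    intro s hs t ht hlt
    have hsub : uIcc s t ⊆ Icc (0:ℝ) 1 := by
      rw [uIcc]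
      exact Icc_subset_Icc (le_min hs.1 ht.1) (max_le hs.2 ht.2)
    have hgt0 : 0 < g t :=
      lt_of_le_of_lt (orbitDist_nonneg lam hlam0 hlam1 _ _) hlt
    obtain ⟨m, hm⟩ : ∃ m : ℕ, g t = lam ^ m := by
      rcases gval t ht with h | h
      · exact absurd h (by linarith)
      · exact h
    -- `g s ≤ lam ^ (m+1)`
    have hgs : g s ≤ lam ^ (m + 1) := by
      rcases gval s hs with h | ⟨k, hk⟩
      · rw [h]; exact (pow_pos hlam0 _).le
      · rw [hk]
        have hkm : m < k := by
          by_contra hc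
          push_neg at hc
          have : lam ^ k ≥ lam ^ m := pow_le_pow_of_le_one hlam0.le hlam1.le hc
          rw [← hk, ← hm] at this
          linarith
        exact pow_le_pow_of_le_one hlam0.le hlam1.le hkm
    have hpow : lam ^ (m + 1) < lam ^ m := by
      have := pow_pos hlam0 m
      rw [pow_succ]
      nlinarith
    set c : ℝ := (lam ^ (m + 1) + lam ^ m) / 2 with hc
    have hc1 : lam ^ (m + 1) < c := by rw [hc]; linarith
    have hc2 : c < lam ^ m := by rw [hc]; linarith
    have hcmem : c ∈ uIcc (g s) (g t) := by
      rw [Set.mem_uIcc]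
      left
      exact ⟨by linarith, by rw [hm]; linarith⟩
    obtain ⟨r, hr, hgr⟩ := intermediate_value_uIcc (gcont.mono hsub) hcmem
    have hrI : r ∈ Icc (0:ℝ) 1 := hsub hr
    rcases gval r hrI with h | ⟨j, hj⟩
    · rw [hgr] at h
      have : (0:ℝ) < c := lt_trans (pow_pos hlam0 _) hc1
      linarith
    · rw [hgr] at hj
      rcases le_or_gt j m with hjm | hjm
      · have : lam ^ m ≤ lam ^ j := pow_le_pow_of_le_one hlam0.le hlam1.le hjm
        linarith
      · have : lam ^ j ≤ lam ^ (m + 1) := pow_le_pow_of_le_one hlam0.le hlam1.le hjm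
        linarith
  intro s hs t ht
  rcases lt_trichotomy (g s) (g t) with h | h | h
  · exact absurd h (aux s hs t ht)
  · exact h
  · exact absurd h (aux t ht s hs)
end

section
/- Assume f satisfies the separation hypothesis and that for every y ∈ M the fiber f⁻¹({y}) has exactly k elements, where k ≥ 2 is a fixed integer. Then for every x₀ ∈ M, the fiber π⁻¹(x₀) = { x ∈ M_f : x(0) = x₀ }, equipped with the topology induced by the metric d, is homeomorphic to the Cantor space ℕ → Fin k with the product topology (each factor Fin k being discrete). -/
open Metric Set

/-- The fiber `π⁻¹(x₀)` of the projection `π : M_f → M`, i.e. the set of full orbits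
of `f` passing through `x₀` at time `0`. -/
def OrbitFiber {M : Type*} (f : M → M) (x₀ : M) : Type _ :=
  {x : ℤ → M // (∀ n : ℤ, f (x n) = x (n + 1)) ∧ x 0 = x₀}

/-- The topology on the fiber `π⁻¹(x₀)` induced by the metric `d`,
generated by the open `d`-balls. -/
noncomputable def orbitFiberTopology {M : Type*} [MetricSpace M] (f : M → M) (lam : ℝ)
    (x₀ : M) : TopologicalSpace (OrbitFiber f x₀) :=
  TopologicalSpace.generateFrom
    {U | ∃ (y : OrbitFiber f x₀) (r : ℝ), 0 < r ∧
      U = {z : OrbitFiber f x₀ | orbitDist lam y.1 z.1 < r}}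

/-! Labelling the `k` preimages of each point identifies `M` with `M × Fin k` through
`b ↦ (f b, label b)`. An orbit through `x₀` is determined by its backward half, and reading off
the labels of `x (-1), x (-2), …` is a bijection onto `ℕ → Fin k`. By the separation hypothesis,
two orbits through `x₀` that first differ at time `-n` are at distance exactly `λⁿ`, so the
`d`-balls are precisely the preimages of the cylinder sets, which generate the product topology. -/

theorem exists_equiv_prod_fst_eq_of_ncard_preimage {M N : Type*} {f : M → N} {k : ℕ}
    (hk : k ≠ 0) (hfib : ∀ y : N, (f ⁻¹' {y}).ncard = k) :
    ∃ φ : M ≃ N × Fin k, ∀ b, (φ b).1 = f b := by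
  have E (y : N) : {b // f b = y} ≃ Fin k :=
    have hcard : Nat.card {b // f b = y} = k := hfib y
    have : Finite {b // f b = y} := Nat.finite_of_card_ne_zero (hcard ▸ hk)
    Finite.equivFinOfCardEq hcard
  exact ⟨(Equiv.sigmaFiberEquiv f).symm.trans
    ((Equiv.sigmaCongrRight E).trans (Equiv.sigmaEquivProd N (Fin k))), fun b => rfl⟩

theorem map_apply_neg_succ {M : Type*} {f : M → M} {x : ℤ → M}
    (hx : ∀ n : ℤ, f (x n) = x (n + 1)) (n : ℕ) :
    f (x (-(n + 1 : ℕ))) = x (-n) := by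
  rw [hx]; congr 1; push_cast; ring

section Coding

variable {M K : Type*} {f : M → M} (φ : M ≃ M × K) (x₀ : M)

def backwardOrbit (s : ℕ → K) : ℕ → M
  | 0 => x₀
  | n + 1 => φ.symm (backwardOrbit s n, s n)

variable {φ} in
theorem map_backwardOrbit_succ (hφ : ∀ b, (φ b).1 = f b) (s : ℕ → K) (n : ℕ) :
    f (backwardOrbit φ x₀ s (n + 1)) = backwardOrbit φ x₀ s n := by
  rw [← hφ, backwardOrbit, Equiv.apply_symm_apply]

variable (f) in
def orbitOfCode (s : ℕ → K) : ℤ → M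
  | (n : ℕ) => f^[n] x₀
  | Int.negSucc n => backwardOrbit φ x₀ s (n + 1)

theorem orbitOfCode_neg (s : ℕ → K) (n : ℕ) :
    orbitOfCode f φ x₀ s (-n) = backwardOrbit φ x₀ s n := by
  cases n <;> rfl

variable {φ} in
theorem orbitOfCode_isOrbit (hφ : ∀ b, (φ b).1 = f b) (s : ℕ → K) (n : ℤ) :
    f (orbitOfCode f φ x₀ s n) = orbitOfCode f φ x₀ s (n + 1) := by
  cases n with
  | ofNat n => exact (Function.iterate_succ_apply' f n x₀).symm
  | negSucc n =>
    rw [show Int.negSucc n + 1 = -(n : ℤ) by omega, orbitOfCode_neg]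
    exact map_backwardOrbit_succ x₀ hφ s n

namespace OrbitFiber

variable {x₀}

theorem apply_natCast (x : OrbitFiber f x₀) (n : ℕ) : x.1 n = f^[n] x₀ := by
  induction n with
  | zero => exact x.2.2
  | succ n ih => rw [Function.iterate_succ_apply', ← ih, x.2.1]; push_cast; rfl

def code (x : OrbitFiber f x₀) (n : ℕ) : K := (φ (x.1 (-(n + 1 : ℕ)))).2

variable {φ}

theorem equiv_apply_neg_succ (hφ : ∀ b, (φ b).1 = f b) (x : OrbitFiber f x₀) (n : ℕ) :
    φ (x.1 (-(n + 1 : ℕ))) = (x.1 (-n), code φ x n) :=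
  Prod.ext (by rw [hφ, map_apply_neg_succ x.2.1]) rfl

theorem backwardOrbit_code (hφ : ∀ b, (φ b).1 = f b) (x : OrbitFiber f x₀) (n : ℕ) :
    backwardOrbit φ x₀ (code φ x) n = x.1 (-n) := by
  induction n with
  | zero => exact x.2.2.symm
  | succ n ih => rw [backwardOrbit, ih, ← equiv_apply_neg_succ hφ, Equiv.symm_apply_apply]

theorem code_mem_cylinder_iff (hφ : ∀ b, (φ b).1 = f b) (x y : OrbitFiber f x₀) (n : ℕ) :
    code φ y ∈ PiNat.cylinder (code φ x) n ↔ ∀ m < n + 1, x.1 (-m) = y.1 (-m) := by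
  induction n with
  | zero => simp [PiNat.cylinder_zero, x.2.2, y.2.2]
  | succ n ih =>
    rw [PiNat.mem_cylinder_iff, Nat.forall_lt_succ_right, ← PiNat.mem_cylinder_iff, ih,
      Nat.forall_lt_succ_right (n := n + 1)]
    refine and_congr_right fun hagree => ?_
    rw [← φ.apply_eq_iff_eq, equiv_apply_neg_succ hφ, equiv_apply_neg_succ hφ,
      hagree n n.lt_succ_self, Prod.mk.injEq]
    simp [eq_comm]

end OrbitFiber

def orbitFiberEquiv {φ : M ≃ M × K} (hφ : ∀ b, (φ b).1 = f b) : OrbitFiber f x₀ ≃ (ℕ → K) where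
  toFun := OrbitFiber.code φ
  invFun s := ⟨orbitOfCode f φ x₀ s, orbitOfCode_isOrbit x₀ hφ s, rfl⟩
  left_inv x := by
    refine Subtype.ext (funext fun n => ?_)
    cases n with
    | ofNat n => exact (x.apply_natCast n).symm
    | negSucc n => exact OrbitFiber.backwardOrbit_code hφ x (n + 1)
  right_inv s := by
    funext n
    simp only [OrbitFiber.code, orbitOfCode_neg, backwardOrbit, Equiv.apply_symm_apply]

end Coding

section OrbitMetric

variable {M : Type*} [MetricSpace M] {lam : ℝ} {x y : ℤ → M}

theorem orbitDist_term_le (hlam : 0 ≤ lam) (n : ℕ) :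
    lam ^ n * min (dist (x (-(n : ℤ))) (y (-(n : ℤ)))) 1 ≤ lam ^ n :=
  mul_le_of_le_one_right (pow_nonneg hlam n) (min_le_right _ _)

theorem le_orbitDist (hlam0 : 0 ≤ lam) (hlam1 : lam ≤ 1) (n : ℕ) :
    lam ^ n * min (dist (x (-(n : ℤ))) (y (-(n : ℤ)))) 1 ≤ orbitDist lam x y := by
  refine le_ciSup (f := fun m : ℕ => lam ^ m * min (dist (x (-(m : ℤ))) (y (-(m : ℤ)))) 1)
    ⟨1, ?_⟩ n
  rintro _ ⟨m, rfl⟩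
  exact (orbitDist_term_le hlam0 m).trans (pow_le_one₀ hlam0 hlam1)

theorem orbitDist_le_pow (hlam0 : 0 ≤ lam) (hlam1 : lam ≤ 1) {N : ℕ}
    (hagree : ∀ m < N, x (-m) = y (-m)) : orbitDist lam x y ≤ lam ^ N := by
  refine ciSup_le fun m => ?_
  rcases lt_or_ge m N with hm | hm
  · simp [hagree m hm, pow_nonneg hlam0]
  · exact (orbitDist_term_le (x := x) (y := y) hlam0 m).trans
      (pow_le_pow_of_le_one hlam0 hlam1 hm)

/-- At the first time `-n` where two orbits through the same point differ, their predecessors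
are distinct points with the same image, hence `1`-separated. -/
theorem pow_le_orbitDist {f : M → M} (hsep : ∀ a b : M, a ≠ b → f a = f b → 1 ≤ dist a b)
    (hlam0 : 0 ≤ lam) (hlam1 : lam ≤ 1) (hx : ∀ n : ℤ, f (x n) = x (n + 1))
    (hy : ∀ n : ℤ, f (y n) = y (n + 1)) (h0 : x 0 = y 0) {n : ℕ} (hn : x (-n) ≠ y (-n)) :
    lam ^ n ≤ orbitDist lam x y := by
  induction n with
  | zero => exact absurd (by simpa using h0) hn
  | succ n ih =>
    by_cases hprev : x (-n) = y (-n)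
    · have hdist : 1 ≤ dist (x (-(n + 1 : ℕ))) (y (-(n + 1 : ℕ))) :=
        hsep _ _ hn (by rw [map_apply_neg_succ hx, map_apply_neg_succ hy, hprev])
      have := le_orbitDist (x := x) (y := y) hlam0 hlam1 (n + 1)
      rwa [min_eq_right hdist, mul_one] at this
    · exact (pow_le_pow_of_le_one hlam0 hlam1 n.le_succ).trans (ih hprev)

theorem orbitDist_lt_iff {f : M → M} (hsep : ∀ a b : M, a ≠ b → f a = f b → 1 ≤ dist a b)
    (hlam0 : 0 ≤ lam) (hlam1 : lam ≤ 1) (hx : ∀ n : ℤ, f (x n) = x (n + 1))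
    (hy : ∀ n : ℤ, f (y n) = y (n + 1)) (h0 : x 0 = y 0) {r : ℝ} {n : ℕ}
    (hn : lam ^ (n + 1) < r) (hr : ∀ m < n + 1, 0 < m → r ≤ lam ^ m) :
    orbitDist lam x y < r ↔ ∀ m < n + 1, x (-m) = y (-m) := by
  refine ⟨fun hlt m hm => ?_, fun hagree => (orbitDist_le_pow hlam0 hlam1 hagree).trans_lt hn⟩
  by_contra hne
  have hm0 : 0 < m := Nat.pos_of_ne_zero fun h => hne (by simpa [h] using h0)
  exact (hr m hm hm0).not_gt (hlt.trans_le' (pow_le_orbitDist hsep hlam0 hlam1 hx hy h0 hne))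

theorem exists_pow_succ_lt_le (hlam0 : 0 ≤ lam) (hlam1 : lam < 1) {r : ℝ} (hr : 0 < r) :
    ∃ n : ℕ, lam ^ (n + 1) < r ∧ ∀ m < n + 1, 0 < m → r ≤ lam ^ m := by
  have hex : ∃ n : ℕ, lam ^ (n + 1) < r := by
    obtain ⟨n, hn⟩ := exists_pow_lt_of_lt_one hr hlam1
    exact ⟨n, (pow_le_pow_of_le_one hlam0 hlam1.le n.le_succ).trans_lt hn⟩
  refine ⟨Nat.find hex, Nat.find_spec hex, fun m hm hm0 => ?_⟩
  obtain ⟨j, rfl⟩ := Nat.exists_eq_add_of_lt hm0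
  exact le_of_not_gt (Nat.find_min hex (by omega))

end OrbitMetric

section Topology

variable {M K : Type*} [MetricSpace M] {f : M → M} {φ : M ≃ M × K} {x₀ : M} {lam : ℝ}

theorem setOf_orbitDist_lt_eq_preimage_cylinder
    (hsep : ∀ a b : M, a ≠ b → f a = f b → 1 ≤ dist a b) (hlam0 : 0 ≤ lam) (hlam1 : lam ≤ 1)
    (hφ : ∀ b, (φ b).1 = f b) (y : OrbitFiber f x₀) {r : ℝ} {n : ℕ}
    (hn : lam ^ (n + 1) < r) (hr : ∀ m < n + 1, 0 < m → r ≤ lam ^ m) :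
    {z : OrbitFiber f x₀ | orbitDist lam y.1 z.1 < r} =
      orbitFiberEquiv x₀ hφ ⁻¹' PiNat.cylinder (orbitFiberEquiv x₀ hφ y) n := by
  ext z
  exact (orbitDist_lt_iff hsep hlam0 hlam1 y.2.1 z.2.1 (y.2.2.trans z.2.2.symm) hn hr).trans
    (OrbitFiber.code_mem_cylinder_iff hφ y z n).symm

theorem orbitFiberTopology_eq_induced [TopologicalSpace K] [DiscreteTopology K]
    (hsep : ∀ a b : M, a ≠ b → f a = f b → 1 ≤ dist a b) (hlam0 : 0 < lam) (hlam1 : lam < 1)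
    (hφ : ∀ b, (φ b).1 = f b) :
    orbitFiberTopology f lam x₀ =
      TopologicalSpace.induced (orbitFiberEquiv x₀ hφ) inferInstance := by
  set e := orbitFiberEquiv x₀ hφ
  rw [(PiNat.isTopologicalBasis_cylinders fun _ => K).eq_generateFrom, induced_generateFrom_eq]
  refine congrArg TopologicalSpace.generateFrom (Set.ext fun U => ⟨?_, ?_⟩)
  · rintro ⟨y, r, hr, rfl⟩
    obtain ⟨n, hn, hrn⟩ := exists_pow_succ_lt_le hlam0.le hlam1 hr
    exact ⟨_, ⟨e y, n, rfl⟩,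
      (setOf_orbitDist_lt_eq_preimage_cylinder hsep hlam0.le hlam1.le hφ y hn hrn).symm⟩
  · rintro ⟨_, ⟨s, n, rfl⟩, rfl⟩
    refine ⟨e.symm s, lam ^ n, pow_pos hlam0 n, ?_⟩
    rw [setOf_orbitDist_lt_eq_preimage_cylinder hsep hlam0.le hlam1.le hφ (e.symm s)
      (pow_lt_pow_right_of_lt_one₀ hlam0 hlam1 n.lt_succ_self)
      (fun m hm _ => pow_le_pow_of_le_one hlam0.le hlam1.le (by omega)), e.apply_symm_apply]

end Topology

/-- under the separation hypothesis, if every fiber of `f` has exactly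
`k ≥ 2` elements, then each fiber `π⁻¹(x₀)` of `π : M_f → M`, with the topology
induced by the metric `d`, is homeomorphic to the Cantor space `ℕ → Fin k`. -/
theorem orbitFiber_homeomorph_cantor {M : Type*} [MetricSpace M] (f : M → M)
    (hsep : ∀ a b : M, a ≠ b → f a = f b → 1 ≤ dist a b)
    (k : ℕ) (hk : 2 ≤ k)
    (hfib : ∀ y : M, (f ⁻¹' {y}).ncard = k)
    (lam : ℝ) (hlam0 : 0 < lam) (hlam1 : lam < 1)
    (x₀ : M) :
    Nonempty (@Homeomorph (OrbitFiber f x₀) (ℕ → Fin k)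
      (orbitFiberTopology f lam x₀) inferInstance) := by
  obtain ⟨φ, hφ⟩ := exists_equiv_prod_fst_eq_of_ncard_preimage (by omega) hfib
  let := orbitFiberTopology f lam x₀
  exact ⟨(orbitFiberEquiv x₀ hφ).toHomeomorphOfIsInducing
    ⟨orbitFiberTopology_eq_induced hsep hlam0 hlam1 hφ⟩⟩
end

section
/- Assume additionally that M is a metric space and f satisfies the separation hypothesis: for all a, b ∈ M, if a ≠ b and f(a) = f(b) then dist(a, b) ≥ 1. Fix a real number λ with 0 < λ < 1 and define on F(x₀) the metric d(x, y) := sup_{n ≥ 0} λ^n · min(dist(x(n), y(n)), 1). Let μ be a measure on F(x₀) (with the cylinder σ-algebra) satisfying μ(C(y, n)) = k^{−n} for all y ∈ F(x₀) and n ∈ ℕ. Then for every y ∈ F(x₀) and every integer m ≥ 1, μ({ z ∈ F(x₀) : d(y, z) ≤ λ^m }) = k^{−(m−1)}. In particular, the measure of a closed d-ball of radius λ^m in F(x₀) does not depend on its center. -/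
open MeasureTheory Metric

/-- The space of backward orbits of `f` through `x₀`. -/
def BackOrbit {M : Type*} (f : M → M) (x₀ : M) : Type _ :=
  {x : ℕ → M // x 0 = x₀ ∧ ∀ n : ℕ, f (x (n + 1)) = x n}

/-- The cylinder of depth `n` at `y`: backward orbits agreeing with `y` up to time `n`. -/
def cylinder {M : Type*} (f : M → M) (x₀ : M) (y : BackOrbit f x₀) (n : ℕ) :
    Set (BackOrbit f x₀) :=
  {z | ∀ i ≤ n, z.1 i = y.1 i}

/-- The σ-algebra on `BackOrbit f x₀` generated by the cylinders. -/
instance backOrbitMeasurableSpace {M : Type*} (f : M → M) (x₀ : M) :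
    MeasurableSpace (BackOrbit f x₀) :=
  MeasurableSpace.generateFrom
    {S | ∃ (y : BackOrbit f x₀) (n : ℕ), S = cylinder f x₀ y n}

/-- The metric `d(x,y) = sup_{n ≥ 0} λⁿ · min (dist (x n) (y n)) 1` on backward
orbits. -/
noncomputable def backOrbitDist {M : Type*} [MetricSpace M] (lam : ℝ) (x y : ℕ → M) : ℝ :=
  ⨆ n : ℕ, lam ^ n * min (dist (x n) (y n)) 1

/-- under the separation hypothesis, if `μ (C(y,n)) = k⁻ⁿ` for all
cylinders, then every closed `d`-ball of radius `λ^m` (`m ≥ 1`) has measure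
`k^{-(m-1)}`, independently of its center. -/
theorem backOrbit_ball_measure {M : Type*} [MetricSpace M] (f : M → M)
    (hsep : ∀ a b : M, a ≠ b → f a = f b → 1 ≤ dist a b)
    (k : ℕ) (hk : 1 ≤ k)
    (hfib : ∀ y : M, (f ⁻¹' {y}).ncard = k)
    (x₀ : M)
    (lam : ℝ) (hlam0 : 0 < lam) (hlam1 : lam < 1)
    (μ : Measure (BackOrbit f x₀))
    (hμ : ∀ (y : BackOrbit f x₀) (n : ℕ), μ (cylinder f x₀ y n) = ((k : ENNReal) ^ n)⁻¹) :
    ∀ (y : BackOrbit f x₀) (m : ℕ), 1 ≤ m →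
      μ {z : BackOrbit f x₀ | backOrbitDist lam y.1 z.1 ≤ lam ^ m} =
        ((k : ENNReal) ^ (m - 1))⁻¹ := by
  intro y m hm
  have hball : {z : BackOrbit f x₀ | backOrbitDist lam y.1 z.1 ≤ lam ^ m}
      = _root_.cylinder f x₀ y (m - 1) := by
    ext z
    simp only [Set.mem_setOf_eq, _root_.cylinder]
    constructor
    · intro hd i hi
      by_contra hne
      have hex : ∃ j, z.1 j ≠ y.1 j := ⟨i, hne⟩
      classical
      have hj : z.1 (Nat.find hex) ≠ y.1 (Nat.find hex) := Nat.find_spec hex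
      have hjle : Nat.find hex ≤ i := Nat.find_le hne
      have hj0 : Nat.find hex ≠ 0 := by
        intro h0
        apply hj
        rw [h0, z.2.1, y.2.1]
      obtain ⟨j', hj'⟩ := Nat.exists_eq_succ_of_ne_zero hj0
      rw [hj'] at hj hjle
      have hprev : z.1 j' = y.1 j' := by
        by_contra h
        have : Nat.find hex ≤ j' := Nat.find_le h
        omega
      have hfz : f (z.1 (j' + 1)) = f (y.1 (j' + 1)) := by
        rw [z.2.2 j', y.2.2 j', hprev]
      have hdist : 1 ≤ dist (z.1 (j' + 1)) (y.1 (j' + 1)) := hsep _ _ hj hfz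
      have hterm : lam ^ (j' + 1) * min (dist (y.1 (j' + 1)) (z.1 (j' + 1))) 1
          = lam ^ (j' + 1) := by
        rw [dist_comm, min_eq_right hdist, mul_one]
      have hbdd : BddAbove (Set.range fun n =>
          lam ^ n * min (dist (y.1 n) (z.1 n)) 1) := by
        refine ⟨1, ?_⟩
        rintro _ ⟨n, rfl⟩
        show lam ^ n * min (dist (y.1 n) (z.1 n)) 1 ≤ 1
        have h1 : lam ^ n ≤ 1 := pow_le_one₀ hlam0.le hlam1.le
        have h2 : min (dist (y.1 n) (z.1 n)) 1 ≤ 1 := min_le_right _ _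
        have h3 : 0 ≤ min (dist (y.1 n) (z.1 n)) 1 := le_min dist_nonneg zero_le_one
        nlinarith [pow_nonneg hlam0.le n]
      have hle : lam ^ (j' + 1) ≤ backOrbitDist lam y.1 z.1 := by
        rw [← hterm]
        exact le_ciSup hbdd (j' + 1)
      have hlt : lam ^ m < lam ^ (j' + 1) :=
        pow_lt_pow_right_of_lt_one₀ hlam0 hlam1 (by omega)
      linarith [hd, hle]
    · intro hz
      apply ciSup_le
      intro n
      rcases le_or_gt n (m - 1) with h | h
      · rw [hz n h, dist_self, min_eq_left zero_le_one, mul_zero]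
        positivity
      · have : lam ^ n ≤ lam ^ m := pow_le_pow_of_le_one hlam0.le hlam1.le (by omega)
        have h2 : min (dist (y.1 n) (z.1 n)) 1 ≤ 1 := min_le_right _ _
        have h3 : 0 ≤ min (dist (y.1 n) (z.1 n)) 1 := le_min dist_nonneg zero_le_one
        calc lam ^ n * min (dist (y.1 n) (z.1 n)) 1 ≤ lam ^ n * 1 := by
              exact mul_le_mul_of_nonneg_left h2 (pow_nonneg hlam0.le n)
          _ ≤ lam ^ m := by rwa [mul_one]
  rw [hball, hμ]
end

section
/- Assume additionally that M is a metric space and f satisfies the separation hypothesis: for all a, b ∈ M, if a ≠ b and f(a) = f(b) then dist(a, b) ≥ 1. Fix a real number λ with 0 < λ < 1, define on F(x₀) the metric d(x, y) := sup_{n ≥ 0} λ^n · min(dist(x(n), y(n)), 1), and write B̄(y, r) := { z ∈ F(x₀) : d(y, z) ≤ r }. Let μ be a measure on F(x₀) (with the cylinder σ-algebra) satisfying μ(C(y, n)) = k^{−n} for all y ∈ F(x₀) and n ∈ ℕ. Let ρ : ℕ → ℝ be a sequence of positive real radii and K ≥ 1 an integer such that ρ(n+1) ≥ λ^K · ρ(n)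 for all n. Then for every y ∈ F(x₀) and every n ∈ ℕ, μ(B̄(y, ρ(n+1))) ≥ k^{−K} · μ(B̄(y, ρ(n))); in particular the sequence of closed balls (B̄(y, ρ(n)))_{n∈ℕ} is regular with respect to μ. -/
open MeasureTheory Metric

/-- The closed `d`-ball of radius `r` centred at `y` in `F(x₀)`. -/
def backOrbitClosedBall {M : Type*} [MetricSpace M] (f : M → M) (x₀ : M) (lam : ℝ)
    (y : BackOrbit f x₀) (r : ℝ) : Set (BackOrbit f x₀) :=
  {z | backOrbitDist lam y.1 z.1 ≤ r}

lemma backOrbit_bdd {M : Type*} [MetricSpace M] {lam : ℝ} (h0 : 0 ≤ lam) (h1 : lam ≤ 1)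
    (x y : ℕ → M) :
    BddAbove (Set.range fun n => lam ^ n * min (dist (x n) (y n)) 1) := by
  refine ⟨1, ?_⟩
  rintro _ ⟨n, rfl⟩
  dsimp only
  have h2 : min (dist (x n) (y n)) 1 ≤ 1 := min_le_right _ _
  have h3 : (0:ℝ) ≤ min (dist (x n) (y n)) 1 := le_min dist_nonneg zero_le_one
  have h4 : lam ^ n ≤ 1 := pow_le_one₀ h0 h1
  have h5 : (0:ℝ) ≤ lam ^ n := pow_nonneg h0 n
  nlinarith

lemma ball_subset_cylinder {M : Type*} [MetricSpace M] {f : M → M}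
    (hsep : ∀ a b : M, a ≠ b → f a = f b → 1 ≤ dist a b) {x₀ : M} {lam r : ℝ}
    (hlam0 : 0 < lam) (hlam1 : lam < 1) (y : BackOrbit f x₀) {m : ℕ}
    (hr : r < lam ^ m) :
    backOrbitClosedBall f x₀ lam y r ⊆ cylinder f x₀ y m := by
  intro z hz
  by_contra hc
  simp only [_root_.cylinder, Set.mem_setOf_eq] at hc
  push_neg at hc
  classical
  have hex : ∃ i, i ≤ m ∧ z.1 i ≠ y.1 i := by
    obtain ⟨i, h1, h2⟩ := hc; exact ⟨i, h1, h2⟩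
  obtain ⟨hjm, hjne⟩ := Nat.find_spec hex
  set j := Nat.find hex with hjdef
  have hj1 : j ≠ 0 := by
    intro h
    apply hjne
    rw [h, z.2.1, y.2.1]
  obtain ⟨j', hj'⟩ : ∃ j', j = j' + 1 := ⟨j - 1, by omega⟩
  have hprev : z.1 j' = y.1 j' := by
    by_contra h
    have hle : Nat.find hex ≤ j' := Nat.find_le ⟨by omega, h⟩
    omega
  have hfz : f (y.1 (j' + 1)) = f (z.1 (j' + 1)) := by
    rw [z.2.2 j', y.2.2 j', hprev]
  have hne : y.1 (j' + 1) ≠ z.1 (j' + 1) := fun h => hjne (by rw [hj']; exact h.symm)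
  have hd : 1 ≤ dist (y.1 (j' + 1)) (z.1 (j' + 1)) := hsep _ _ hne hfz
  have hterm : lam ^ (j' + 1) ≤ backOrbitDist lam y.1 z.1 := by
    have := le_ciSup (backOrbit_bdd hlam0.le hlam1.le y.1 z.1) (j' + 1)
    rwa [min_eq_right hd, mul_one] at this
  have hmono : lam ^ m ≤ lam ^ (j' + 1) :=
    pow_le_pow_of_le_one hlam0.le hlam1.le (by omega)
  have := hz
  simp only [backOrbitClosedBall, Set.mem_setOf_eq] at this
  linarith

lemma cylinder_subset_ball {M : Type*} [MetricSpace M] {f : M → M} {x₀ : M} {lam r : ℝ}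
    (hlam0 : 0 < lam) (hlam1 : lam < 1) (y : BackOrbit f x₀) {m : ℕ}
    (hr : lam ^ (m + 1) ≤ r) :
    cylinder f x₀ y m ⊆ backOrbitClosedBall f x₀ lam y r := by
  intro z hz
  show backOrbitDist lam y.1 z.1 ≤ r
  rw [backOrbitDist]
  have hrpos : (0:ℝ) ≤ r := le_trans (pow_nonneg hlam0.le _) hr
  refine ciSup_le fun i => ?_
  rcases le_or_gt i m with h | h
  · rw [hz i h, dist_self]
    simp [hrpos]
  · have h1 : lam ^ i ≤ lam ^ (m + 1) :=
      pow_le_pow_of_le_one hlam0.le hlam1.le (by omega)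
    have h2 : min (dist (y.1 i) (z.1 i)) 1 ≤ 1 := min_le_right _ _
    have h3 : (0:ℝ) ≤ min (dist (y.1 i) (z.1 i)) 1 := le_min dist_nonneg zero_le_one
    have h5 : (0:ℝ) ≤ lam ^ i := pow_nonneg hlam0.le i
    nlinarith

/-- under the separation hypothesis, if `μ (C(y,n)) = k⁻ⁿ` and
`ρ : ℕ → ℝ` is a sequence of positive radii with `ρ (n+1) ≥ λ^K · ρ n`, then
`μ (B̄(y, ρ (n+1))) ≥ k^{-K} · μ (B̄(y, ρ n))` for all `y` and `n`; in particular
the sequence of closed balls `B̄(y, ρ n)` is regular with respect to `μ`. -/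
theorem backOrbit_balls_regular {M : Type*} [MetricSpace M] (f : M → M)
    (hsep : ∀ a b : M, a ≠ b → f a = f b → 1 ≤ dist a b)
    (k : ℕ) (hk : 1 ≤ k)
    (hfib : ∀ y : M, (f ⁻¹' {y}).ncard = k)
    (x₀ : M)
    (lam : ℝ) (hlam0 : 0 < lam) (hlam1 : lam < 1)
    (μ : Measure (BackOrbit f x₀))
    (hμ : ∀ (y : BackOrbit f x₀) (n : ℕ), μ (cylinder f x₀ y n) = ((k : ENNReal) ^ n)⁻¹)
    (ρ : ℕ → ℝ) (hρpos : ∀ n, 0 < ρ n)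
    (K : ℕ) (hK : 1 ≤ K)
    (hρ : ∀ n, lam ^ K * ρ n ≤ ρ (n + 1)) :
    ∀ (y : BackOrbit f x₀) (n : ℕ),
      ((k : ENNReal) ^ K)⁻¹ * μ (backOrbitClosedBall f x₀ lam y (ρ n)) ≤
        μ (backOrbitClosedBall f x₀ lam y (ρ (n + 1))) := by
  intro y n
  have hex : ∃ m, lam ^ m ≤ ρ n := by
    obtain ⟨m, hm⟩ := exists_pow_lt_of_lt_one (hρpos n) hlam1
    exact ⟨m, hm.le⟩
  set N := Nat.find hex with hNdef
  have hN : lam ^ N ≤ ρ n := Nat.find_spec hex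
  -- upper bound on μ of the small ball
  have hsub1 : backOrbitClosedBall f x₀ lam y (ρ n) ⊆ cylinder f x₀ y (N - 1) := by
    rcases Nat.eq_zero_or_pos N with h0 | h0
    · intro z _ i hi
      rw [h0] at hi
      interval_cases i
      rw [z.2.1, y.2.1]
    · apply ball_subset_cylinder hsep hlam0 hlam1 y
      have hmin : ¬ lam ^ (N - 1) ≤ ρ n := Nat.find_min hex (by omega)
      linarith [not_le.mp hmin]
  -- lower bound on μ of the big ball
  have hsub2 : cylinder f x₀ y (N + K - 1) ⊆
      backOrbitClosedBall f x₀ lam y (ρ (n + 1)) := by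
    apply cylinder_subset_ball hlam0 hlam1 y
    have h1 : (N + K - 1) + 1 = K + N := by omega
    rw [h1, pow_add]
    calc lam ^ K * lam ^ N ≤ lam ^ K * ρ n :=
          mul_le_mul_of_nonneg_left hN (pow_nonneg hlam0.le K)
      _ ≤ ρ (n + 1) := hρ n
  have hk0 : (k : ENNReal) ≠ 0 := Nat.cast_ne_zero.mpr (by omega)
  have hk1 : (1 : ENNReal) ≤ (k : ENNReal) := by exact_mod_cast hk
  have hupper : μ (backOrbitClosedBall f x₀ lam y (ρ n)) ≤ ((k : ENNReal) ^ (N - 1))⁻¹ := by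
    rw [← hμ y (N - 1)]
    exact measure_mono hsub1
  calc ((k : ENNReal) ^ K)⁻¹ * μ (backOrbitClosedBall f x₀ lam y (ρ n))
      ≤ ((k : ENNReal) ^ K)⁻¹ * ((k : ENNReal) ^ (N - 1))⁻¹ := mul_le_mul_right hupper _
    _ = ((k : ENNReal) ^ (K + (N - 1)))⁻¹ := by
        rw [pow_add, ENNReal.mul_inv (Or.inl (pow_ne_zero _ hk0))
          (Or.inl (ENNReal.pow_ne_top (ENNReal.natCast_ne_top k)))]
    _ ≤ ((k : ENNReal) ^ (N + K - 1))⁻¹ := by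
        apply ENNReal.inv_le_inv.mpr
        exact pow_le_pow_right₀ hk1 (by omega)
    _ = μ (cylinder f x₀ y (N + K - 1)) := (hμ y _).symm
    _ ≤ μ (backOrbitClosedBall f x₀ lam y (ρ (n + 1))) := measure_mono hsub2
end
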